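/- Let n ≥ 2, let p₁ < p₂ < ⋯ < pₙ < 0 be reals, w₁, …, wₙ > 0, and let β ∈ ℝ satisfy 1 + p_{n−1} − pₙ < β < 1. Then there exists x₀ > 0 such that for all x ≥ x₀: Σ_{i=1}^n w_i·(x + x^β)^{p_i−1} ≤ wₙ·x^{pₙ−1}. -/

import Mathlib

/-!
Write `x + x^β = x (1 + t)` with `t = x^(β-1) ≤ 1`. By Bernoulli, the top term satisfies
`wₙ (x + x^β)^(pₙ-1) ≤ wₙ x^(pₙ-1) (1 - t/2)`, a saving of order `x^(pₙ+β-2)`. All other terms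
are at most `W x^(p_{n-1}-1)` with `W = Σ_{i<n} wᵢ`, and `p_{n-1} - 1 < pₙ + β - 2` is exactly the
condition on `β`, so this is eventually smaller than the saving.
-/

open Filter Topology Finset

lemma one_add_rpow_neg_le_one_sub_half {t r : ℝ} (ht0 : 0 ≤ t) (ht1 : t ≤ 1) (hr : 1 ≤ r) :
    (1 + t) ^ (-r) ≤ 1 - t / 2 := by
  have hbern : 1 + r * t ≤ (1 + t) ^ r := one_add_mul_self_le_rpow_one_add (by linarith) hr
  have hpos : 0 < 1 + r * t := by positivity
  calc (1 + t) ^ (-r) = ((1 + t) ^ r)⁻¹ := Real.rpow_neg (by linarith) r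
    _ ≤ (1 + r * t)⁻¹ := inv_anti₀ hpos hbern
    _ ≤ 1 - t / 2 := by
      rw [inv_le_iff_one_le_mul₀' hpos]
      nlinarith [mul_nonneg (mul_nonneg ht0 (sub_nonneg.2 ht1)) (by linarith : (0 : ℝ) ≤ r),
        mul_nonneg ht0 (sub_nonneg.2 hr)]

lemma add_rpow_eq_mul_one_add {x : ℝ} (hx : 0 < x) (β : ℝ) :
    x + x ^ β = x * (1 + x ^ (β - 1)) := by
  rw [mul_one_add, mul_comm, ← Real.rpow_add_one hx.ne', sub_add_cancel]

lemma rpow_le_rpow_of_one_le_of_le_of_nonpos {x y a b : ℝ} (hx : 1 ≤ x) (hxy : x ≤ y)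
    (hba : b ≤ a) (ha : a ≤ 0) : y ^ b ≤ x ^ a :=
  (Real.rpow_le_rpow_of_exponent_le (hx.trans hxy) hba).trans
    (Real.rpow_le_rpow_of_nonpos (by linarith) hxy ha)

lemma eventually_mul_rpow_add_add_le {W w a q β : ℝ} (hw : 0 < w) (hq : q ≤ 0) (hβ : β ≤ 1)
    (ha : a < q + β - 1) :
    ∀ᶠ x in atTop, W * x ^ (a - 1) + w * (x + x ^ β) ^ (q - 1) ≤ w * x ^ (q - 1) := by
  set e := a - q - β + 1
  have hsmall : ∀ᶠ x in atTop, W * x ^ e < w / 2 := by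
    have : Tendsto (fun x : ℝ => W * x ^ (-(-e))) atTop (𝓝 (W * 0)) :=
      (tendsto_rpow_neg_atTop (by linarith)).const_mul W
    rw [mul_zero] at this
    simpa using this.eventually (gt_mem_nhds (half_pos hw))
  filter_upwards [eventually_ge_atTop 1, hsmall] with x hx1 hxe
  have hx0 : 0 < x := by linarith
  set t := x ^ (β - 1)
  have ht0 : 0 < t := Real.rpow_pos_of_pos hx0 _
  have ht1 : t ≤ 1 := Real.rpow_le_one_of_one_le_of_nonpos hx1 (by linarith)
  have hxq : 0 < x ^ (q - 1) := Real.rpow_pos_of_pos hx0 _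
  have htop : (x + x ^ β) ^ (q - 1) ≤ x ^ (q - 1) * (1 - t / 2) := by
    rw [add_rpow_eq_mul_one_add hx0, Real.mul_rpow hx0.le (by positivity)]
    gcongr
    simpa using one_add_rpow_neg_le_one_sub_half ht0.le ht1 (by linarith : 1 ≤ 1 - q)
  have hlow : W * x ^ (a - 1) ≤ w / 2 * (x ^ (q - 1) * t) := by
    have hsplit : x ^ (a - 1) = x ^ e * (x ^ (q - 1) * t) := by
      rw [← Real.rpow_add hx0, ← Real.rpow_add hx0]
      congr 1
      ring
    rw [hsplit, ← mul_assoc]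
    exact mul_le_mul_of_nonneg_right hxe.le (by positivity)
  nlinarith

lemma eventually_sum_mul_rpow_add_le {ι : Type*} [Fintype ι] [DecidableEq ι]
    (p w : ι → ℝ) (m : ι) {a β : ℝ} (hw : ∀ i, 0 ≤ w i) (hwm : 0 < w m) (hpm : p m ≤ 0)
    (hβ : β ≤ 1) (hp : ∀ i ≠ m, p i ≤ a) (ha : a < p m + β - 1) :
    ∀ᶠ x in atTop, ∑ i, w i * (x + x ^ β) ^ (p i - 1) ≤ w m * x ^ (p m - 1) := by
  filter_upwards [eventually_ge_atTop 1,
    eventually_mul_rpow_add_add_le (W := ∑ i ∈ univ.erase m, w i) hwm hpm hβ ha] with x hx1 hx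
  have hxy : x ≤ x + x ^ β := le_add_of_nonneg_right (by positivity)
  have hlow : ∑ i ∈ univ.erase m, w i * (x + x ^ β) ^ (p i - 1) ≤
      (∑ i ∈ univ.erase m, w i) * x ^ (a - 1) := by
    rw [sum_mul]
    refine sum_le_sum fun i hi => mul_le_mul_of_nonneg_left ?_ (hw i)
    exact rpow_le_rpow_of_one_le_of_le_of_nonpos hx1 hxy
      (by linarith [hp i (ne_of_mem_erase hi)]) (by linarith)
  rw [← sum_erase_add _ _ (mem_univ m)]
  linarith

/-- Key asymptotic comparison in the proof of Proposition 2.13: for large `x`,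
`U₁'(x + x^β) = Σ wᵢ (x + x^β)^{pᵢ-1} ≤ wₙ x^{pₙ-1} = U₂'(x)` whenever
`1 + p_{n-1} - pₙ < β < 1`. -/
theorem linear_sharing_marginal_comparison
    (n : ℕ) (hn : 2 ≤ n)
    (p : Fin n → ℝ) (hpmono : StrictMono p) (hpneg : ∀ i, p i < 0)
    (w : Fin n → ℝ) (hw : ∀ i, 0 < w i)
    (β : ℝ) (hβ1 : β < 1)
    (hβ2 : 1 + p ⟨n - 2, by omega⟩ - p ⟨n - 1, by omega⟩ < β) :
    ∃ x₀ : ℝ, 0 < x₀ ∧ ∀ x : ℝ, x₀ ≤ x →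
      (∑ i, w i * (x + x ^ β) ^ (p i - 1)) ≤
        w ⟨n - 1, by omega⟩ * x ^ (p ⟨n - 1, by omega⟩ - 1) := by
  have hp : ∀ i ≠ ⟨n - 1, by omega⟩, p i ≤ p ⟨n - 2, by omega⟩ := fun i hi =>
    hpmono.monotone <| by simp only [ne_eq, Fin.ext_iff, Fin.le_def] at hi ⊢; omega
  obtain ⟨x₀, hx₀⟩ := eventually_atTop.1 <| eventually_sum_mul_rpow_add_le p w _
    (fun i => (hw i).le) (hw _) (hpneg _).le hβ1.le hp (by linarith)
  exact ⟨max x₀ 1, by positivity, fun x hx => hx₀ x (le_of_max_le_left hx)⟩
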